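/- Let μ be a locally finite positive Borel measure, F a collection of dyadic intervals contained in a fixed interval I₀ satisfying the Carleson condition ∑_{F' ∈ F, F' ⊆ F} μ(F') ≤ C_F μ(F) for all F ∈ F. Then for all 1 < p < ∞, ∫_{I₀} (∑_{F ∈ F, F ⊆ I₀} 1_F(y))^{p/2} dμ(y) ≤ C μ(I₀), with C depending only on p and C_F. -/

import Mathlib

/-!
Let `N = ∑_{F} 1_F` and let `m ≥ p / 2` be an integer. Expanding `N ^ m`, every `m`-tuple of
intervals with a common point can be sorted by scale into a chain `F₁ ⊆ ⋯ ⊆ Fₘ`, so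
`∫ N ^ m dμ ≤ m! ∑_{chains} μ(F₁)`. Summing out the smallest interval one step at a time with the
Carleson condition bounds this by `m! C_F ^ (m - 1) ∑_F μ(F)`, and grouping the intervals under
the maximal ones, which are disjoint subsets of `I₀`, gives `∑_F μ(F) ≤ C_F μ(I₀)`. The exponent
`p / 2` is handled by `x ^ (p / 2) ≤ 1 + x ^ m`, and infinite families by monotone convergence
over finite subfamilies.
-/

open MeasureTheory Set
open scoped ENNReal NNReal

/-- The dyadic interval `[k·2ⁿ, (k+1)·2ⁿ)`. -/
def dyadicInterval (n k : ℤ) : Set ℝ :=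
  Set.Ico ((k : ℝ) * 2 ^ n) (((k : ℝ) + 1) * 2 ^ n)

theorem ENNReal.iSup_rpow {ι : Sort*} (f : ι → ℝ≥0∞) {c : ℝ} (hc : 0 < c) :
    (⨆ i, f i) ^ c = ⨆ i, f i ^ c :=
  (ENNReal.monotone_rpow_of_nonneg hc.le).map_iSup_of_continuousAt
    (ENNReal.continuous_rpow_const.continuousAt) (ENNReal.zero_rpow_of_pos hc)

theorem ENNReal.rpow_le_one_add_pow (x : ℝ≥0∞) {c : ℝ} (hc : 0 ≤ c) {m : ℕ} (hm : c ≤ m) :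
    x ^ c ≤ 1 + x ^ m := by
  rcases le_total x 1 with h | h
  · exact (ENNReal.rpow_le_one h hc).trans le_self_add
  · rw [← ENNReal.rpow_natCast]
    exact (ENNReal.rpow_le_rpow_of_exponent_le h hm).trans le_add_self

theorem lintegral_tsum_rpow_eq_iSup {α κ : Type*} [MeasurableSpace α] [Countable κ]
    {μ : Measure α} {f : κ → α → ℝ≥0∞} (hf : ∀ k, Measurable (f k)) {c : ℝ} (hc : 0 < c) :
    ∫⁻ x, (∑' k, f k x) ^ c ∂μ = ⨆ s : Finset κ, ∫⁻ x, (∑ k ∈ s, f k x) ^ c ∂μ := by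
  simp_rw [ENNReal.tsum_eq_iSup_sum, ENNReal.iSup_rpow _ hc]
  exact lintegral_iSup_directed
    (fun s => ((Finset.measurable_sum s fun k _ => hf k).pow_const c).aemeasurable)
    (Monotone.directed_le fun s t hst x =>
      ENNReal.rpow_le_rpow (Finset.sum_le_sum_of_subset hst) hc.le)

theorem mem_dyadicInterval_iff {n k : ℤ} {x : ℝ} :
    x ∈ dyadicInterval n k ↔ ⌊x / 2 ^ n⌋ = k := by
  have h : (0 : ℝ) < 2 ^ n := by positivity
  rw [Int.floor_eq_iff, le_div_iff₀ h, div_lt_iff₀ h]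
  rfl

theorem measurableSet_dyadicInterval (n k : ℤ) : MeasurableSet (dyadicInterval n k) :=
  measurableSet_Ico

theorem dyadicInterval_nonempty (n k : ℤ) : (dyadicInterval n k).Nonempty :=
  nonempty_Ico.2 (mul_lt_mul_of_pos_right (lt_add_one _) (by positivity))

theorem floor_div_two_zpow_of_le {n n' : ℤ} (h : n ≤ n') (x : ℝ) :
    ⌊x / 2 ^ n'⌋ = ⌊x / 2 ^ n⌋ / 2 ^ (n' - n).toNat := by
  have hpow : (2 : ℝ) ^ n' = 2 ^ n * ((2 ^ (n' - n).toNat : ℕ) : ℝ) := by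
    rw [Nat.cast_pow, Nat.cast_ofNat, ← zpow_natCast, Int.toNat_of_nonneg (by omega),
      ← zpow_add₀ two_ne_zero, add_sub_cancel]
  rw [hpow, ← div_div, Int.floor_div_natCast]
  push_cast
  rfl

theorem dyadicInterval_subset_of_le {n k n' k' : ℤ} (h : n ≤ n') {x : ℝ}
    (hx : x ∈ dyadicInterval n k) (hx' : x ∈ dyadicInterval n' k') :
    dyadicInterval n k ⊆ dyadicInterval n' k' := by
  intro y hy
  rw [mem_dyadicInterval_iff] at hx hx' hy ⊢
  rw [floor_div_two_zpow_of_le h] at hx' ⊢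
  rw [hy, ← hx, hx']

theorem dyadicInterval_injective :
    Function.Injective fun q : ℤ × ℤ => dyadicInterval q.1 q.2 := by
  rintro ⟨n, k⟩ ⟨n', k'⟩ h
  obtain ⟨hl, hr⟩ := (Ico_eq_Ico_iff (Or.inl (nonempty_Ico.1 (dyadicInterval_nonempty n k)))).1 h
  have hn : n = n' := zpow_right_injective₀ (a := (2 : ℝ)) two_pos (by norm_num) (by linarith)
  subst hn
  have hk : (k : ℝ) = k' := mul_right_cancel₀ (by positivity) hl
  simp_all

abbrev dyadicIntervalOf (q : ℤ × ℤ) : Set ℝ := dyadicInterval q.1 q.2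

section CarlesonFamily

variable {α ι : Type*} [MeasurableSpace α]

open Classical in
noncomputable def chainWeight (μ : Measure α) (J : ι → Set α) {m : ℕ} (g : Fin (m + 1) → ι) :
    ℝ≥0∞ :=
  if Monotone (J ∘ g) then μ (J (g 0)) else 0

variable [Fintype ι]

open Classical in
def IsCarlesonFamily (μ : Measure α) (C : ℝ≥0∞) (J : ι → Set α) : Prop :=
  ∀ i, ∑ j with J j ⊆ J i, μ (J j) ≤ C * μ (J i)

variable {μ : Measure α} {C : ℝ≥0∞}

theorem isCarlesonFamily_of_tsum_le {κ : Type*} {J : κ → Set α} {S : Set κ}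
    (hS : ∀ r₀ ∈ S, ∑' r : {r // r ∈ S ∧ J r ⊆ J r₀}, μ (J r) ≤ C * μ (J r₀))
    {q : ι → κ} (hq : Function.Injective q) (hqS : ∀ i, q i ∈ S) :
    IsCarlesonFamily μ C (J ∘ q) := by
  classical
  intro i
  calc ∑ j with J (q j) ⊆ J (q i), μ (J (q j))
      = ∑' j : {j // J (q j) ⊆ J (q i)}, μ (J (q j)) := by
        rw [tsum_fintype, Finset.sum_subtype]
        simp
    _ ≤ ∑' r : {r // r ∈ S ∧ J r ⊆ J (q i)}, μ (J r) := by
        let e : {j // J (q j) ⊆ J (q i)} → {r // r ∈ S ∧ J r ⊆ J (q i)} :=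
          fun j => ⟨q j, hqS j, j.2⟩
        exact ENNReal.tsum_comp_le_tsum_of_injective (f := e)
          (fun _ _ h => Subtype.ext (hq (congrArg Subtype.val h))) fun r => μ (J r)
    _ ≤ C * μ (J (q i)) := hS _ (hqS i)

variable {J : ι → Set α}

theorem sum_chainWeight_cons_le (hJ : IsCarlesonFamily μ C J) {m : ℕ} (t : Fin (m + 1) → ι) :
    ∑ a, chainWeight μ J (Fin.cons a t) ≤ C * chainWeight μ J t := by
  classical
  have hcons (a : ι) : J ∘ Fin.cons a t = Matrix.vecCons (J a) (J ∘ t) := Fin.comp_cons _ _ _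
  by_cases ht : Monotone (J ∘ t)
  · calc ∑ a, chainWeight μ J (Fin.cons a t)
        = ∑ a with J a ⊆ J (t 0), μ (J a) := by
          rw [Finset.sum_filter]
          refine Finset.sum_congr rfl fun a _ => ?_
          simp [chainWeight, hcons, ht]
      _ ≤ C * μ (J (t 0)) := hJ (t 0)
      _ = C * chainWeight μ J t := by simp [chainWeight, ht]
  · have hzero (a : ι) : chainWeight μ J (Fin.cons a t) = 0 := by
      simp [chainWeight, hcons, ht]
    simp [hzero]

theorem sum_chainWeight_le (hJ : IsCarlesonFamily μ C J) (m : ℕ) :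
    ∑ g : Fin (m + 1) → ι, chainWeight μ J g ≤ C ^ m * ∑ i, μ (J i) := by
  induction m with
  | zero =>
    rw [pow_zero, one_mul, ← (Equiv.funUnique (Fin 1) ι).symm.sum_comp]
    exact Finset.sum_le_sum fun i _ => by
      simp [chainWeight, Subsingleton.monotone]
  | succ m ih =>
    calc ∑ g : Fin (m + 2) → ι, chainWeight μ J g
        = ∑ t : Fin (m + 1) → ι, ∑ a, chainWeight μ J (Fin.cons a t) := by
          rw [← (Fin.consEquiv fun _ => ι).sum_comp, Fintype.sum_prod_type, Finset.sum_comm]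
          rfl
      _ ≤ ∑ t : Fin (m + 1) → ι, C * chainWeight μ J t :=
          Finset.sum_le_sum fun t _ => sum_chainWeight_cons_le hJ t
      _ ≤ C ^ (m + 1) * ∑ i, μ (J i) := by
          rw [← Finset.mul_sum, pow_succ', mul_assoc]
          gcongr

theorem sum_sum_chainWeight_perm {m : ℕ} (μ : Measure α) (J : ι → Set α) :
    ∑ g : Fin (m + 1) → ι, ∑ σ : Equiv.Perm (Fin (m + 1)), chainWeight μ J (g ∘ σ)
      = (m + 1).factorial * ∑ g : Fin (m + 1) → ι, chainWeight μ J g := by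
  rw [Finset.sum_comm]
  have (σ : Equiv.Perm (Fin (m + 1))) :
      ∑ g : Fin (m + 1) → ι, chainWeight μ J (g ∘ σ) = ∑ g, chainWeight μ J g :=
    (σ.symm.arrowCongr (Equiv.refl ι)).sum_comp (chainWeight μ J)
  simp [this, Fintype.card_perm]

theorem lintegral_sum_indicator_pow_le (μ : Measure α) (hJ : ∀ i, MeasurableSet (J i))
    (I₀ : Set α) (n : ℕ) :
    ∫⁻ x in I₀, (∑ i, (J i).indicator (fun _ => (1 : ℝ≥0∞)) x) ^ n ∂μ
      ≤ ∑ g : Fin n → ι, μ (⋂ k, J (g k)) := by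
  have hexpand (x : α) : (∑ i, (J i).indicator (fun _ => (1 : ℝ≥0∞)) x) ^ n
      = ∑ g : Fin n → ι, (⋂ k, J (g k)).indicator 1 x := by
    simp [Fintype.sum_pow, prod_indicator_apply, ← Pi.one_def]
  have hmeas (g : Fin n → ι) : MeasurableSet (⋂ k, J (g k)) := .iInter fun k => hJ (g k)
  simp_rw [hexpand]
  rw [lintegral_finsetSum _ fun g _ => measurable_one.indicator (hmeas g)]
  refine Finset.sum_le_sum fun g _ => ?_
  rw [lintegral_indicator_one (hmeas g)]
  exact Measure.restrict_apply_le _ _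

end CarlesonFamily

section DyadicFamily

variable {ι : Type*}

theorem measure_iInter_le_sum_chainWeight_perm (μ : Measure ℝ) (q : ι → ℤ × ℤ) {m : ℕ}
    (g : Fin (m + 1) → ι) :
    μ (⋂ k, dyadicIntervalOf (q (g k)))
      ≤ ∑ σ : Equiv.Perm (Fin (m + 1)), chainWeight μ (dyadicIntervalOf ∘ q) (g ∘ σ) := by
  rcases eq_empty_or_nonempty (⋂ k, dyadicIntervalOf (q (g k))) with h | ⟨x, hx⟩
  · simp [h]
  rw [mem_iInter] at hx
  -- intervals through a common point are nested by scale, so sorting by scale yields a chain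
  set σ := Tuple.sort fun k => (q (g k)).1
  have hchain : Monotone ((dyadicIntervalOf ∘ q) ∘ g ∘ σ) := fun i j hij =>
    dyadicInterval_subset_of_le (Tuple.monotone_sort (fun k => (q (g k)).1) hij) (hx _) (hx _)
  calc μ (⋂ k, dyadicIntervalOf (q (g k))) ≤ μ (dyadicIntervalOf (q (g (σ 0)))) :=
        measure_mono (iInter_subset _ _)
    _ = chainWeight μ (dyadicIntervalOf ∘ q) (g ∘ σ) := by
        rw [chainWeight, if_pos hchain]; rfl
    _ ≤ _ := Finset.single_le_sum (f := fun τ : Equiv.Perm (Fin (m + 1)) =>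
          chainWeight μ (dyadicIntervalOf ∘ q) (g ∘ τ)) (fun _ _ => zero_le) (Finset.mem_univ σ)

variable [Fintype ι] {μ : Measure ℝ} {C : ℝ≥0∞} {q : ι → ℤ × ℤ}

theorem exists_maximal_dyadicInterval_superset (hq : Function.Injective q) (i : ι) :
    ∃ M, dyadicIntervalOf (q i) ⊆ dyadicIntervalOf (q M) ∧
      ∀ j, dyadicIntervalOf (q M) ⊆ dyadicIntervalOf (q j) → j = M := by
  classical
  obtain ⟨M, hM, hmax⟩ := Finset.exists_max_image
    {j | dyadicIntervalOf (q i) ⊆ dyadicIntervalOf (q j)} (fun j => (q j).1) ⟨i, by simp⟩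
  rw [Finset.mem_filter_univ] at hM
  refine ⟨M, hM, fun j hMj => hq (dyadicInterval_injective ?_)⟩
  obtain ⟨x, hx⟩ := dyadicInterval_nonempty (q M).1 (q M).2
  exact (dyadicInterval_subset_of_le (hmax j (by simpa using hM.trans hMj)) (hMj hx) hx).antisymm
    hMj

theorem sum_measure_le_of_isCarlesonFamily (hq : Function.Injective q) {I₀ : Set ℝ}
    (hI₀ : ∀ i, dyadicIntervalOf (q i) ⊆ I₀) (hC : IsCarlesonFamily μ C (dyadicIntervalOf ∘ q)) :
    ∑ i, μ (dyadicIntervalOf (q i)) ≤ C * μ I₀ := by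
  classical
  set J := dyadicIntervalOf ∘ q
  set maximal : Finset ι := {M | ∀ j, J M ⊆ J j → j = M}
  have hcover (i : ι) : ∃ M ∈ maximal, J i ⊆ J M := by
    obtain ⟨M, hiM, hM⟩ := exists_maximal_dyadicInterval_superset hq i
    exact ⟨M, Finset.mem_filter.2 ⟨Finset.mem_univ _, hM⟩, hiM⟩
  have hdisj : (maximal : Set ι).PairwiseDisjoint J := by
    intro M hM M' hM' hne
    rw [Function.onFun, Set.disjoint_left]
    intro x hx hx'
    rw [Finset.mem_coe, Finset.mem_filter_univ] at hM hM'
    rcases le_total (q M).1 (q M').1 with h | h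
    · exact hne (hM M' (dyadicInterval_subset_of_le h hx hx')).symm
    · exact hne (hM' M (dyadicInterval_subset_of_le h hx' hx))
  calc ∑ i, μ (J i) ≤ ∑ i, ∑ M ∈ maximal with J i ⊆ J M, μ (J i) := by
        refine Finset.sum_le_sum fun i _ => ?_
        obtain ⟨M, hM, hiM⟩ := hcover i
        exact Finset.single_le_sum (f := fun _ => μ (J i)) (fun _ _ => zero_le)
          (Finset.mem_filter.2 ⟨hM, hiM⟩)
    _ = ∑ M ∈ maximal, ∑ i with J i ⊆ J M, μ (J i) :=
        Finset.sum_comm' (by simp [and_comm])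
    _ ≤ ∑ M ∈ maximal, C * μ (J M) := Finset.sum_le_sum fun M _ => hC M
    _ = C * μ (⋃ M ∈ maximal, J M) := by
        rw [← Finset.mul_sum,
          measure_biUnion_finset hdisj fun M _ => measurableSet_dyadicInterval _ _]
    _ ≤ C * μ I₀ := by
        gcongr
        exact iUnion₂_subset fun M _ => hI₀ M

theorem lintegral_sum_indicator_pow_le_of_isCarlesonFamily (hq : Function.Injective q)
    {I₀ : Set ℝ} (hI₀ : ∀ i, dyadicIntervalOf (q i) ⊆ I₀)
    (hC : IsCarlesonFamily μ C (dyadicIntervalOf ∘ q)) (n : ℕ) :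
    ∫⁻ x in I₀, (∑ i, (dyadicIntervalOf (q i)).indicator (fun _ => (1 : ℝ≥0∞)) x) ^ n ∂μ
      ≤ n.factorial * C ^ n * μ I₀ := by
  cases n with
  | zero => simp
  | succ m =>
    calc ∫⁻ x in I₀, (∑ i, (dyadicIntervalOf (q i)).indicator (fun _ => (1 : ℝ≥0∞)) x) ^ (m + 1) ∂μ
        ≤ ∑ g : Fin (m + 1) → ι, μ (⋂ k, dyadicIntervalOf (q (g k))) :=
          lintegral_sum_indicator_pow_le (J := dyadicIntervalOf ∘ q) μ
            (fun _ => measurableSet_dyadicInterval _ _) I₀ (m + 1)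
      _ ≤ ∑ g : Fin (m + 1) → ι, ∑ σ : Equiv.Perm (Fin (m + 1)),
            chainWeight μ (dyadicIntervalOf ∘ q) (g ∘ σ) :=
          Finset.sum_le_sum fun g _ => measure_iInter_le_sum_chainWeight_perm μ q g
      _ = (m + 1).factorial * ∑ g : Fin (m + 1) → ι, chainWeight μ (dyadicIntervalOf ∘ q) g :=
          sum_sum_chainWeight_perm μ _
      _ ≤ (m + 1).factorial * (C ^ m * (C * μ I₀)) := by
          gcongr
          exact (sum_chainWeight_le hC m).trans
            (by gcongr; exact sum_measure_le_of_isCarlesonFamily hq hI₀ hC)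
      _ = (m + 1).factorial * C ^ (m + 1) * μ I₀ := by ring

theorem lintegral_sum_indicator_rpow_le_of_isCarlesonFamily (hq : Function.Injective q)
    {I₀ : Set ℝ} (hI₀ : ∀ i, dyadicIntervalOf (q i) ⊆ I₀)
    (hC : IsCarlesonFamily μ C (dyadicIntervalOf ∘ q)) {c : ℝ} (hc : 0 ≤ c) :
    ∫⁻ x in I₀, (∑ i, (dyadicIntervalOf (q i)).indicator (fun _ => (1 : ℝ≥0∞)) x) ^ c ∂μ
      ≤ (1 + (⌈c⌉₊).factorial * C ^ ⌈c⌉₊) * μ I₀ :=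
  calc _ ≤ ∫⁻ x in I₀,
          1 + (∑ i, (dyadicIntervalOf (q i)).indicator (fun _ => (1 : ℝ≥0∞)) x) ^ ⌈c⌉₊ ∂μ :=
        lintegral_mono fun _ => ENNReal.rpow_le_one_add_pow _ hc (Nat.le_ceil c)
    _ = μ I₀ + ∫⁻ x in I₀,
          (∑ i, (dyadicIntervalOf (q i)).indicator (fun _ => (1 : ℝ≥0∞)) x) ^ ⌈c⌉₊ ∂μ := by
        rw [lintegral_add_left measurable_const, setLIntegral_const, one_mul]
    _ ≤ μ I₀ + (⌈c⌉₊).factorial * C ^ ⌈c⌉₊ * μ I₀ := by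
        gcongr
        exact lintegral_sum_indicator_pow_le_of_isCarlesonFamily hq hI₀ hC _
    _ = (1 + (⌈c⌉₊).factorial * C ^ ⌈c⌉₊) * μ I₀ := by ring

end DyadicFamily

/-- Carleson embedding for overlap functions: if `F` is a Carleson family of dyadic
intervals contained in `I₀` with Carleson constant `C_F`, then for `1 < p < ∞`,
`∫_{I₀} (∑_{F ∈ F} 1_F)^{p/2} dμ ≤ C μ(I₀)` with `C` depending only on `p, C_F`. -/
theorem stmt16 (p : ℝ) (hp : 1 < p) (CF : ℝ≥0) :
    ∃ C : ℝ≥0∞, C ≠ ⊤ ∧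
      ∀ (μ : Measure ℝ), IsLocallyFiniteMeasure μ →
        ∀ (I₀ : Set ℝ) (F : Set (ℤ × ℤ)),
          (∀ q ∈ F, dyadicInterval q.1 q.2 ⊆ I₀) →
          (∀ q₀ ∈ F,
            ∑' q : {q : ℤ × ℤ // q ∈ F ∧
                dyadicInterval q.1 q.2 ⊆ dyadicInterval q₀.1 q₀.2},
              μ (dyadicInterval q.1.1 q.1.2)
              ≤ (CF : ℝ≥0∞) * μ (dyadicInterval q₀.1 q₀.2)) →
          ∫⁻ x in I₀,
              (∑' q : F,
                (dyadicInterval q.1.1 q.1.2).indicator (fun _ => (1 : ℝ≥0∞)) x) ^ (p / 2) ∂μ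
            ≤ C * μ I₀ := by
  have hp2 : 0 < p / 2 := by linarith
  refine ⟨1 + (⌈p / 2⌉₊).factorial * CF ^ ⌈p / 2⌉₊, by finiteness, fun μ _ I₀ F hI₀ hF => ?_⟩
  rw [lintegral_tsum_rpow_eq_iSup
    (fun _ => measurable_const.indicator (measurableSet_dyadicInterval _ _)) hp2]
  refine iSup_le fun s => ?_
  have hq : Function.Injective fun i : s => ((i : F) : ℤ × ℤ) :=
    Subtype.val_injective.comp Subtype.val_injective
  simp_rw [← Finset.sum_coe_sort s]
  exact lintegral_sum_indicator_rpow_le_of_isCarlesonFamily hq (fun i => hI₀ _ i.1.2)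
    (isCarlesonFamily_of_tsum_le hF hq fun i => i.1.2) hp2.le
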